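/- arXiv:2303.17165 — 3 statements merged into one kernel-verified Lean document; each statement's English description precedes it below -/
import Mathlib

section
/- (Lemma 1) Let W be symmetric, doubly stochastic and positive definite, with 1 a simple eigenvalue and second-largest eigenvalue λ₂ ∈ (0,1). Given α > 0, let x̂* = (x̂*₁,…,x̂*ₘ) be a local minimizer of Q_α (in particular ∇Q_α(x̂*) = 0). Then for each i = 1,…,m, ‖x̂*_i − x̄*‖ ≤ α ‖∇F(x̂*)‖ / (1 − λ₂), where x̄* = (1/m) Σ_{j=1}^m x̂*_j. -/
/-!
At a local minimizer the first-order condition reads `α ∇F(x̂*) = -(I - Ŵ) x̂*`. Since `W 1 = 1`,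
`I - Ŵ` annihilates the consensus vector `1 ⊗ x̄*`, so `(I - Ŵ) x̂* = (I - Ŵ) v` for the deviation
`v = x̂* - 1 ⊗ x̄*`. Each column of `v` (one coordinate of `ℝⁿ` across all agents) is orthogonal to
`1`, which spans the `1`-eigenspace of `W`; on that complement every eigenvalue of `I - W` is at
least `1 - λ₂`. Hence `‖x̂*ᵢ - x̄*‖ ≤ ‖v‖ ≤ ‖(I - Ŵ) v‖ / (1 - λ₂) = α ‖∇F(x̂*)‖ / (1 - λ₂)`.
-/

open scoped BigOperators RealInnerProductSpace
open Matrix MeasureTheory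

noncomputable section

/-- The stacked space `(ℝⁿ)ᵐ ≅ ℝ^{mn}`. -/
abbrev BigSpace (m n : ℕ) := EuclideanSpace ℝ (Fin m × Fin n)

/-- The `i`-th block component `x̂ᵢ ∈ ℝⁿ` of `x̂ ∈ ℝ^{mn}`. -/
def comp {m n : ℕ} (x : BigSpace m n) (i : Fin m) : EuclideanSpace ℝ (Fin n) :=
  WithLp.toLp 2 (fun j => x (i, j))

/-- `F(x̂) = Σᵢ fᵢ(x̂ᵢ)`. -/
def stackF {m n : ℕ} (f : Fin m → EuclideanSpace ℝ (Fin n) → ℝ) (x : BigSpace m n) : ℝ :=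
  ∑ i, f i (comp x i)

/-- The action of `Ŵ = W ⊗ Iₙ` on `ℝ^{mn}`. -/
def Wact {m n : ℕ} (W : Matrix (Fin m) (Fin m) ℝ) (x : BigSpace m n) : BigSpace m n :=
  WithLp.toLp 2 (fun p : Fin m × Fin n => ∑ k, W p.1 k * x (k, p.2))

def IsDoublyStochastic {m : ℕ} (W : Matrix (Fin m) (Fin m) ℝ) : Prop :=
  (∀ i j, 0 ≤ W i j) ∧ (∀ i, ∑ j, W i j = 1) ∧ (∀ j, ∑ i, W i j = 1)

/-- The auxiliary function `Q_α(x̂) = F(x̂) + (1/(2α)) x̂ᵀ(I_{mn} − Ŵ)x̂`. -/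
def Qaux {m n : ℕ} (f : Fin m → EuclideanSpace ℝ (Fin n) → ℝ)
    (W : Matrix (Fin m) (Fin m) ℝ) (α : ℝ) (x : BigSpace m n) : ℝ :=
  stackF f x + (1 / (2 * α)) * ⟪x, x - Wact W x⟫

/-- The Hessian quadratic form `vᵀ (∇²g(x)) v`, via the second iterated Fréchet derivative. -/
def hessQF {E : Type*} [NormedAddCommGroup E] [NormedSpace ℝ E]
    (g : E → ℝ) (x v : E) : ℝ :=
  iteratedFDeriv ℝ 2 g x ![v, v]

open scoped Kronecker

section Spectral

variable {ι : Type*} [Fintype ι] [DecidableEq ι] {W : Matrix ι ι ℝ} (hW : W.IsHermitian)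

theorem Matrix.IsHermitian.toEuclideanLin_eigenvectorBasis (k : ι) :
    toEuclideanLin W (hW.eigenvectorBasis k) = hW.eigenvalues k • hW.eigenvectorBasis k := by
  ext i
  simpa using congrFun (hW.mulVec_eigenvectorBasis k) i

theorem Matrix.IsHermitian.inner_eigenvectorBasis_toEuclideanLin (k : ι)
    (u : EuclideanSpace ℝ ι) :
    ⟪hW.eigenvectorBasis k, toEuclideanLin W u⟫ =
      hW.eigenvalues k * ⟪hW.eigenvectorBasis k, u⟫ := by
  rw [← isSymmetric_toEuclideanLin_iff.mpr hW, hW.toEuclideanLin_eigenvectorBasis,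
    real_inner_smul_left]

theorem Matrix.IsHermitian.inner_eigenvectorBasis_eq_zero_of_inner_eq_zero {μ : ℝ}
    (hsimple : ∃! k, hW.eigenvalues k = μ) {v u : EuclideanSpace ℝ ι}
    (hv : toEuclideanLin W v = μ • v) (hv0 : v ≠ 0) (hvu : ⟪v, u⟫ = 0)
    {k : ι} (hk : hW.eigenvalues k = μ) : ⟪hW.eigenvectorBasis k, u⟫ = 0 := by
  set B := hW.eigenvectorBasis
  have hcoord : ∀ j ≠ k, ⟪B j, v⟫ = 0 := fun j hj => by
    have hμ : hW.eigenvalues j ≠ μ := fun h => hj (hsimple.unique h hk)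
    have := hW.inner_eigenvectorBasis_toEuclideanLin j v
    rw [hv, real_inner_smul_right] at this
    exact (mul_eq_mul_right_iff.mp this).resolve_left (Ne.symm hμ)
  have hv_eq : v = ⟪B k, v⟫ • B k := by
    conv_lhs => rw [← B.sum_repr' v]
    exact Finset.sum_eq_single k (fun j _ hj => by rw [hcoord j hj, zero_smul])
      (by simp)
  have hvk : ⟪B k, v⟫ ≠ 0 := fun h => hv0 (by rw [hv_eq, h, zero_smul])
  rw [hv_eq, real_inner_smul_left] at hvu
  exact (mul_eq_zero.mp hvu).resolve_left hvk

theorem Matrix.IsHermitian.sq_mul_norm_le_sq_norm_sub_toEuclideanLin {lam : ℝ} (hlam : lam ≤ 1)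
    (hsimple : ∃! k, hW.eigenvalues k = 1)
    (hgap : ∀ k, hW.eigenvalues k = 1 ∨ hW.eigenvalues k ≤ lam) {v u : EuclideanSpace ℝ ι}
    (hv : toEuclideanLin W v = v) (hv0 : v ≠ 0) (hvu : ⟪v, u⟫ = 0) :
    ((1 - lam) * ‖u‖) ^ 2 ≤ ‖u - toEuclideanLin W u‖ ^ 2 := by
  set B := hW.eigenvectorBasis
  rw [mul_pow, ← B.sum_sq_inner_right, ← B.sum_sq_inner_right, Finset.mul_sum]
  refine Finset.sum_le_sum fun k _ => ?_
  rw [inner_sub_right, hW.inner_eigenvectorBasis_toEuclideanLin, ← one_sub_mul, mul_pow]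
  rcases hgap k with hk | hk
  · have : ⟪B k, u⟫ = 0 := hW.inner_eigenvectorBasis_eq_zero_of_inner_eq_zero hsimple
      (by rw [hv, one_smul]) hv0 hvu hk
    simp [this]
  · gcongr

theorem Matrix.IsHermitian.sq_mul_norm_le_sq_norm_sub_toEuclideanLin_of_sum_eq_zero
    (hrow : ∀ i, ∑ j, W i j = 1) {lam : ℝ} (hlam : lam ≤ 1)
    (hsimple : ∃! k, hW.eigenvalues k = 1)
    (hgap : ∀ k, hW.eigenvalues k = 1 ∨ hW.eigenvalues k ≤ lam) {u : EuclideanSpace ℝ ι}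
    (hu : ∑ i, u i = 0) :
    ((1 - lam) * ‖u‖) ^ 2 ≤ ‖u - toEuclideanLin W u‖ ^ 2 := by
  let ones : EuclideanSpace ℝ ι := WithLp.toLp 2 1
  obtain ⟨k, -⟩ := hsimple.exists
  refine hW.sq_mul_norm_le_sq_norm_sub_toEuclideanLin hlam hsimple hgap (v := ones) ?_ ?_ ?_
  · ext i
    simp [ones, mulVec, dotProduct, hrow]
  · intro h
    simpa [ones] using congrArg (· k) h
  · simpa [ones, PiLp.inner_apply] using hu

end Spectral

section Gradient

variable {E : Type*} [NormedAddCommGroup E] [InnerProductSpace ℝ E]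

theorem IsLocalMin.gradient_eq_neg_of_hasGradientAt_add [CompleteSpace E] {g h : E → ℝ}
    {x h' : E} (hmin : IsLocalMin (fun y => g y + h y) x) (hg : DifferentiableAt ℝ g x)
    (hh : HasGradientAt h h' x) : gradient g x = -h' := by
  have := hmin.hasFDerivAt_eq_zero (HasFDerivAt.add hg.hasGradientAt hh)
  rw [← map_add, LinearIsometryEquiv.map_eq_zero_iff] at this
  exact eq_neg_of_add_eq_zero_left this

theorem LinearMap.IsSymmetric.hasGradientAt_inner_self [FiniteDimensional ℝ E]
    {T : E →ₗ[ℝ] E} (hT : T.IsSymmetric) (x : E) :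
    HasGradientAt (fun y => ⟪y, T y⟫) ((2 : ℝ) • T x) x := by
  let T' : E →L[ℝ] E := LinearMap.toContinuousLinearMap T
  refine ((hasFDerivAt_id x).inner ℝ T'.hasFDerivAt).congr_fderiv ?_
  ext v
  change ⟪x, T v⟫ + ⟪v, T x⟫ = ⟪(2 : ℝ) • T x, v⟫
  rw [real_inner_smul_left, hT, ← hT v x, real_inner_comm x (T v)]
  ring

end Gradient

namespace BigSpace

variable {m n : ℕ}

def col (x : BigSpace m n) (j : Fin n) : EuclideanSpace ℝ (Fin m) :=
  WithLp.toLp 2 fun k => x (k, j)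

def consensus (y : EuclideanSpace ℝ (Fin n)) : BigSpace m n :=
  WithLp.toLp 2 fun p => y p.2

def mean (x : BigSpace m n) : EuclideanSpace ℝ (Fin n) :=
  (m : ℝ)⁻¹ • ∑ j, comp x j

theorem sum_norm_col_sq (x : BigSpace m n) : ∑ j, ‖x.col j‖ ^ 2 = ‖x‖ ^ 2 := by
  simp_rw [EuclideanSpace.norm_sq_eq, Fintype.sum_prod_type]
  exact Finset.sum_comm

theorem norm_comp_le (x : BigSpace m n) (i : Fin m) : ‖comp x i‖ ≤ ‖x‖ := by
  refine (pow_le_pow_iff_left₀ (norm_nonneg _) (norm_nonneg _) two_ne_zero).mp ?_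
  rw [EuclideanSpace.norm_sq_eq, EuclideanSpace.norm_sq_eq, Fintype.sum_prod_type]
  exact Finset.single_le_sum (f := fun k => ∑ j, ‖x (k, j)‖ ^ 2)
    (fun k _ => Finset.sum_nonneg fun j _ => sq_nonneg _) (Finset.mem_univ i)

theorem col_sub (x y : BigSpace m n) (j : Fin n) : (x - y).col j = x.col j - y.col j := rfl

theorem col_Wact (W : Matrix (Fin m) (Fin m) ℝ) (x : BigSpace m n) (j : Fin n) :
    (Wact W x).col j = toEuclideanLin W (x.col j) := rfl

theorem Wact_consensus {W : Matrix (Fin m) (Fin m) ℝ} (hrow : ∀ i, ∑ j, W i j = 1)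
    (y : EuclideanSpace ℝ (Fin n)) : Wact W (consensus y) = consensus y := by
  ext p
  simp [Wact, consensus, ← Finset.sum_mul, hrow]

theorem sum_col_sub_consensus_mean (x : BigSpace m n) (j : Fin n) :
    ∑ k, (x - consensus x.mean).col j k = 0 := by
  rcases Nat.eq_zero_or_pos m with rfl | hm
  · simp
  simp only [col, consensus, mean, _root_.comp, PiLp.sub_apply, PiLp.smul_apply, WithLp.ofLp_sum,
    Finset.sum_apply, smul_eq_mul, Finset.sum_sub_distrib, Finset.sum_const, Finset.card_univ,
    Fintype.card_fin, nsmul_eq_mul]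
  rw [mul_inv_cancel_left₀ (by positivity), sub_self]

theorem Wact_eq_toEuclideanLin_kronecker (W : Matrix (Fin m) (Fin m) ℝ) (x : BigSpace m n) :
    Wact W x = toEuclideanLin (W ⊗ₖ (1 : Matrix (Fin n) (Fin n) ℝ)) x := by
  ext p
  simp [Wact, mulVec, dotProduct, Fintype.sum_prod_type, one_apply]

theorem Wact_sub (W : Matrix (Fin m) (Fin m) ℝ) (x y : BigSpace m n) :
    Wact W (x - y) = Wact W x - Wact W y := by
  simp only [Wact_eq_toEuclideanLin_kronecker, map_sub]

theorem mul_norm_le_norm_sub_Wact {W : Matrix (Fin m) (Fin m) ℝ} (hW : W.IsHermitian)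
    (hrow : ∀ i, ∑ j, W i j = 1) {lam : ℝ} (hlam : lam ≤ 1)
    (hsimple : ∃! k, hW.eigenvalues k = 1)
    (hgap : ∀ k, hW.eigenvalues k = 1 ∨ hW.eigenvalues k ≤ lam) {x : BigSpace m n}
    (hx : ∀ j, ∑ k, x.col j k = 0) :
    (1 - lam) * ‖x‖ ≤ ‖x - Wact W x‖ := by
  refine (pow_le_pow_iff_left₀ (mul_nonneg (sub_nonneg.2 hlam) (norm_nonneg _)) (norm_nonneg _)
    two_ne_zero).mp ?_
  rw [mul_pow, ← sum_norm_col_sq, ← sum_norm_col_sq, Finset.mul_sum]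
  refine Finset.sum_le_sum fun j _ => ?_
  rw [← mul_pow, col_sub, col_Wact]
  exact hW.sq_mul_norm_le_sq_norm_sub_toEuclideanLin_of_sum_eq_zero hrow hlam hsimple hgap (hx j)

end BigSpace

theorem differentiableAt_stackF {m n : ℕ} {f : Fin m → EuclideanSpace ℝ (Fin n) → ℝ}
    {x : BigSpace m n} (hf : ∀ i, DifferentiableAt ℝ (f i) (comp x i)) :
    DifferentiableAt ℝ (stackF f) x := by
  have hcomp (i : Fin m) : DifferentiableAt ℝ (fun y : BigSpace m n => comp y i) x :=
    differentiableAt_euclidean.mpr fun j =>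
      (EuclideanSpace.proj (i, j) : BigSpace m n →L[ℝ] ℝ).differentiableAt
  exact DifferentiableAt.fun_sum fun i _ => (hf i).comp x (hcomp i)

theorem gradient_stackF_eq_of_isLocalMin_Qaux {m n : ℕ}
    {f : Fin m → EuclideanSpace ℝ (Fin n) → ℝ} {W : Matrix (Fin m) (Fin m) ℝ}
    (hW : W.IsHermitian) {α : ℝ} {x : BigSpace m n}
    (hf : ∀ i, DifferentiableAt ℝ (f i) (comp x i)) (hmin : IsLocalMin (Qaux f W α) x) :
    gradient (stackF f) x = -α⁻¹ • (x - Wact W x) := by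
  let T : BigSpace m n →ₗ[ℝ] BigSpace m n :=
    (1 / (2 * α)) • toEuclideanLin (1 - W ⊗ₖ (1 : Matrix (Fin n) (Fin n) ℝ))
  have hWI : (W ⊗ₖ (1 : Matrix (Fin n) (Fin n) ℝ)).IsHermitian := by
    rw [IsHermitian, conjTranspose_kronecker, hW.eq, conjTranspose_one]
  have hT : T.IsSymmetric := (isSymmetric_toEuclideanLin_iff.mpr
    (isHermitian_one.sub hWI)).smul (by simp)
  have hTy (y : BigSpace m n) : T y = (1 / (2 * α)) • (y - Wact W y) := by
    simp [T, BigSpace.Wact_eq_toEuclideanLin_kronecker]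
  have hQ : Qaux f W α = fun y => stackF f y + ⟪y, T y⟫ := by
    ext y
    rw [Qaux, hTy, real_inner_smul_right]
  rw [hQ] at hmin
  rw [hmin.gradient_eq_neg_of_hasGradientAt_add (differentiableAt_stackF hf)
    (hT.hasGradientAt_inner_self x), hTy, smul_smul, ← neg_smul]
  congr 2
  ring

theorem stmt7_general {m n : ℕ}
    (f : Fin m → EuclideanSpace ℝ (Fin n) → ℝ)
    (hf : ∀ i, ContDiff ℝ 1 (f i))
    (W : Matrix (Fin m) (Fin m) ℝ) (hW : W.IsHermitian)
    (hds : IsDoublyStochastic W)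
    (hsimple : ∃! i, hW.eigenvalues i = 1)
    (lam2 : ℝ) (hlam2_lt : lam2 < 1)
    (hub : ∀ i, hW.eigenvalues i = 1 ∨ hW.eigenvalues i ≤ lam2)
    (α : ℝ) (hα : 0 < α)
    (xstar : BigSpace m n) (hmin : IsLocalMin (Qaux f W α) xstar) :
    ∀ i : Fin m,
      ‖comp xstar i - (m : ℝ)⁻¹ • ∑ j, comp xstar j‖ ≤
        α * ‖gradient (stackF f) xstar‖ / (1 - lam2) := by
  intro i
  set v := xstar - BigSpace.consensus xstar.mean with hv
  have hdev : v - Wact W v = xstar - Wact W xstar := by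
    rw [hv, BigSpace.Wact_sub, BigSpace.Wact_consensus hds.2.1, sub_sub_sub_cancel_right]
  have hgrad : α * ‖gradient (stackF f) xstar‖ = ‖xstar - Wact W xstar‖ := by
    rw [gradient_stackF_eq_of_isLocalMin_Qaux hW
      (fun i => (hf i).differentiable one_ne_zero _) hmin, norm_smul, norm_neg, norm_inv,
      Real.norm_of_nonneg hα.le, mul_inv_cancel_left₀ hα.ne']
  rw [le_div_iff₀ (sub_pos.2 hlam2_lt), hgrad, ← hdev, mul_comm]
  calc (1 - lam2) * ‖comp xstar i - xstar.mean‖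
      = (1 - lam2) * ‖comp v i‖ := rfl
    _ ≤ (1 - lam2) * ‖v‖ := by gcongr; exact v.norm_comp_le i
    _ ≤ ‖v - Wact W v‖ := BigSpace.mul_norm_le_norm_sub_Wact hW hds.2.1 hlam2_lt.le hsimple
        hub (xstar.sum_col_sub_consensus_mean)

/-- Lemma 1: with `W` symmetric, doubly stochastic, positive definite,
`1` a simple eigenvalue and `λ₂ ∈ (0,1)` the second-largest eigenvalue, if `x̂*` is a
local minimizer of `Q_α` (so in particular `∇Q_α(x̂*) = 0`), then for each `i`,
`‖x̂*ᵢ − x̄*‖ ≤ α ‖∇F(x̂*)‖ / (1 − λ₂)` where `x̄* = (1/m) Σⱼ x̂*ⱼ`. -/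
theorem stmt7 {m n : ℕ} (hm : 0 < m)
    (f : Fin m → EuclideanSpace ℝ (Fin n) → ℝ)
    (hf : ∀ i, ContDiff ℝ 1 (f i))
    (W : Matrix (Fin m) (Fin m) ℝ) (hW : W.IsHermitian)
    (hds : IsDoublyStochastic W) (hpd : W.PosDef)
    (hsimple : ∃! i, hW.eigenvalues i = 1)
    (lam2 : ℝ) (hlam2_pos : 0 < lam2) (hlam2_lt : lam2 < 1)
    (hub : ∀ i, hW.eigenvalues i = 1 ∨ hW.eigenvalues i ≤ lam2)
    (hmem : ∃ i, hW.eigenvalues i ≠ 1 ∧ hW.eigenvalues i = lam2)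
    (α : ℝ) (hα : 0 < α)
    (xstar : BigSpace m n) (hmin : IsLocalMin (Qaux f W α) xstar) :
    ∀ i : Fin m,
      ‖comp xstar i - (m : ℝ)⁻¹ • ∑ j, comp xstar j‖ ≤
        α * ‖gradient (stackF f) xstar‖ / (1 - lam2) :=
  stmt7_general f hf W hW hds hsimple lam2 hlam2_lt hub α hα xstar hmin
end
end

section
/- (Lemma 3) Let W be symmetric, doubly stochastic and positive definite, with 1 a simple eigenvalue and second-largest eigenvalue λ₂ ∈ (0,1). Suppose each f_i is twice continuously differentiable with H_i-Lipschitz Hessian (in operator norm) and set L_F^H = max_i H_i. Given α > 0, let x̂* be a local minimizer of Q_α (in particular ∇Q_α(x̂*) = 0) and let x̄* = (1/m) Σ_{j=1}^m x̂*_j. Then the minimum eigenvalue of the Hessian of f at x̄* satisfies λ_min(∇²f(x̄*)) ≥ −α · L_F^H · m² · ‖∇F(x̂*)‖ / (1 − λ₂). -/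
open scoped BigOperators RealInnerProductSpace
open Matrix MeasureTheory

noncomputable section

/-!
At a local minimizer `x̂*` of `Q_α` two optimality conditions hold. The first-order one reads
`(I - Ŵ) x̂* = -α ∇F(x̂*)`. Since `Ŵ` fixes the consensus vectors `𝟙 ⊗ u`, and `1` is a simple
eigenvalue of `W`, the consensus error `y = x̂* - 𝟙 ⊗ x̄*` lies in the span of the other
eigenvectors, so `(1 - λ₂) ‖y‖² ≤ ⟪y, (I - Ŵ) y⟫ = -α ⟪y, ∇F(x̂*)⟫`, whence
`‖y‖ ≤ α ‖∇F(x̂*)‖ / (1 - λ₂)`. Along a consensus direction `𝟙 ⊗ v` the penalty of `Q_α` is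
affine, so the second-order condition gives `∑ᵢ ∇²fᵢ(x̂*ᵢ)[v, v] ≥ 0`. Moving each Hessian from
`x̂*ᵢ` to `x̄*` costs at most `Hᵢ ‖y‖ ‖v‖²`, and summing over `i` gives the bound.
-/

open scoped Kronecker
open Filter Topology

theorem IsLocalMin.deriv_deriv_nonneg {g : ℝ → ℝ} {a : ℝ} (hmin : IsLocalMin g a)
    (hg : ContDiff ℝ 2 g) : 0 ≤ deriv (deriv g) a := by
  by_contra! hneg
  set d := deriv (deriv g) a
  have hg₁ : Differentiable ℝ g := hg.differentiable (by norm_num)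
  have hg₂ : DifferentiableAt ℝ (deriv g) a :=
    (hg.iterate_deriv' 1 1).differentiable (by norm_num) a
  -- The perturbation keeps a negative second derivative at `a`, so `a` is a local maximum of
  -- `h` by the second-derivative test; against the minimum of `g` this forces `(t - a)² ≤ 0`.
  set h : ℝ → ℝ := fun t => g t - d / 4 * (t - a) ^ 2
  have hderiv : deriv h = fun t => deriv g t - d / 2 * (t - a) := by
    funext t
    have hsq : HasDerivAt (fun s => (s - a) ^ 2) (2 * (t - a)) t := by
      simpa using ((hasDerivAt_id t).sub_const a).fun_pow 2
    rw [((hg₁ t).hasDerivAt.fun_sub (hsq.const_mul (d / 4))).deriv]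
    ring
  have hmax : IsLocalMax h a := by
    refine isLocalMax_of_deriv_deriv_neg ?_ ?_ (hg₁.continuous.sub (by fun_prop)).continuousAt
    · have hlin : HasDerivAt (fun s => d / 2 * (s - a)) (d / 2) a := by
        simpa using ((hasDerivAt_id a).sub_const a).const_mul (d / 2)
      rw [hderiv, (hg₂.hasDerivAt.fun_sub hlin).deriv]
      linarith
    · simp [hderiv, hmin.deriv_eq_zero]
  have hsq : ∀ᶠ t in 𝓝 a, (t - a) ^ 2 ≤ 0 := by
    filter_upwards [hmin, hmax] with t h₁ h₂
    simp only [h, sub_self] at h₂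
    nlinarith
  obtain ⟨t, ht, hta⟩ := ((hsq.filter_mono nhdsWithin_le_nhds).and
    (self_mem_nhdsWithin (s := {a}ᶜ))).exists
  exact hta (by nlinarith [sq_nonneg (t - a)] : t = a)

theorem IsLocalMin.hasGradientAt_eq_zero {F : Type*} [NormedAddCommGroup F]
    [InnerProductSpace ℝ F] [CompleteSpace F] {f : F → ℝ} {a f' : F} (h : IsLocalMin f a)
    (hf : HasGradientAt f f' a) : f' = 0 :=
  (InnerProductSpace.toDual ℝ F).map_eq_zero_iff.mp (h.hasFDerivAt_eq_zero hf.hasFDerivAt)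

theorem nonneg_of_norm_sub_le_mul_norm_sub {X Y : Type*} [NormedAddCommGroup X]
    [SeminormedAddCommGroup Y] {φ : X → Y} {K : ℝ} (hφ : ∀ x y, ‖φ x - φ y‖ ≤ K * ‖x - y‖)
    {x y : X} (hxy : x ≠ y) : 0 ≤ K :=
  nonneg_of_mul_nonneg_left ((norm_nonneg _).trans (hφ x y))
    (norm_pos_iff.mpr (sub_ne_zero.mpr hxy))

theorem Fintype.sum_le_card_mul_iSup {ι : Type*} [Fintype ι] (H : ι → ℝ) :
    ∑ i, H i ≤ Fintype.card ι * ⨆ i, H i :=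
  (Finset.sum_le_card_nsmul _ _ _ fun i _ => le_ciSup (Set.finite_range H).bddAbove i).trans_eq
    (by simp)

section Hessian

variable {E : Type*} [NormedAddCommGroup E] [NormedSpace ℝ E]

theorem hessQF_zero_right (ψ : E → ℝ) (x : E) : hessQF ψ x 0 = 0 :=
  (iteratedFDeriv ℝ 2 ψ x).map_coord_zero 0 rfl

theorem hessQF_sum {ι : Type*} (s : Finset ι) {g : ι → E → ℝ} {x : E}
    (hg : ∀ i ∈ s, ContDiffAt ℝ 2 (g i) x) (v : E) :
    hessQF (fun y => ∑ i ∈ s, g i y) x v = ∑ i ∈ s, hessQF (g i) x v := by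
  simp only [hessQF, iteratedFDeriv_fun_sum_apply hg, _root_.sum_apply]

theorem hessQF_comp_add_left (ψ : E → ℝ) (a v : E) :
    hessQF (fun u => ψ (a + u)) 0 v = hessQF ψ a v := by
  simp [hessQF, iteratedFDeriv_comp_add_left]

theorem hessQF_sub_le_of_lipschitz {ψ : E → ℝ} {K δ : ℝ}
    (hψ : ∀ x y, ‖iteratedFDeriv ℝ 2 ψ x - iteratedFDeriv ℝ 2 ψ y‖ ≤ K * ‖x - y‖) (hK : 0 ≤ K)
    {x y : E} (hxy : ‖x - y‖ ≤ δ) (v : E) :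
    hessQF ψ y v - K * δ * ‖v‖ ^ 2 ≤ hessQF ψ x v := by
  have hop : |hessQF ψ x v - hessQF ψ y v| ≤
      ‖iteratedFDeriv ℝ 2 ψ x - iteratedFDeriv ℝ 2 ψ y‖ * ‖v‖ ^ 2 := by
    simpa [hessQF, Fin.prod_univ_two, ← sq] using
      (iteratedFDeriv ℝ 2 ψ x - iteratedFDeriv ℝ 2 ψ y).le_opNorm ![v, v]
  have hδ : ‖iteratedFDeriv ℝ 2 ψ x - iteratedFDeriv ℝ 2 ψ y‖ ≤ K * δ :=
    (hψ x y).trans (mul_le_mul_of_nonneg_left hxy hK)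
  nlinarith [neg_abs_le (hessQF ψ x v - hessQF ψ y v), sq_nonneg ‖v‖]

theorem ContDiff.deriv_deriv_comp_add_smul {ψ : E → ℝ} (hψ : ContDiff ℝ 2 ψ) (x v : E) :
    deriv (deriv fun t : ℝ => ψ (x + t • v)) 0 = hessQF ψ x v := by
  have hderiv : deriv (fun t : ℝ => ψ (x + t • v)) =
      fun t => iteratedFDeriv ℝ 1 ψ (x + t • v) fun _ => v := by
    funext t
    simpa using (hψ.contDiffAt (x := x + t • v)).of_le (by norm_num)
      |>.deriv_fderiv_add_smul (n := 0)
  rw [hderiv, (hψ.contDiffAt (x := x + (0 : ℝ) • v)).deriv_fderiv_add_smul (n := 1), zero_smul,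
    add_zero, hessQF]
  congr 1
  ext i
  fin_cases i <;> rfl

theorem hessQF_nonneg_of_isLocalMin_comp_add_smul {ψ : E → ℝ} (hψ : ContDiff ℝ 2 ψ) {x v : E}
    {a b : ℝ} (hmin : IsLocalMin (fun t : ℝ => ψ (x + t • v) + (a + b * t)) 0) :
    0 ≤ hessQF ψ x v := by
  have hline : ContDiff ℝ 2 fun t : ℝ => ψ (x + t • v) := hψ.comp (by fun_prop)
  have hderiv : deriv (fun t : ℝ => ψ (x + t • v) + (a + b * t)) =
      fun t => deriv (fun t : ℝ => ψ (x + t • v)) t + b := by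
    funext t
    rw [deriv_fun_add (hline.differentiable (by norm_num) t) (by fun_prop)]
    simp
  have := hmin.deriv_deriv_nonneg (hline.add (by fun_prop))
  rwa [hderiv, deriv_add_const, hψ.deriv_deriv_comp_add_smul] at this

end Hessian

section Spectral

variable {ι E : Type*} [Fintype ι] [NormedAddCommGroup E] [InnerProductSpace ℝ E]
  {T : E →ₗ[ℝ] E} {b : OrthonormalBasis ι ℝ E} {μ : ι → ℝ}

theorem OrthonormalBasis.inner_map_self_le (hT : T.IsSymmetric) (hb : ∀ i, T (b i) = μ i • b i)
    {c : ℝ} {z : E} (hz : ∀ i, c < μ i → ⟪b i, z⟫ = 0) : ⟪z, T z⟫ ≤ c * ‖z‖ ^ 2 := by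
  rw [← b.sum_inner_mul_inner z (T z), ← b.sum_sq_inner_right, Finset.mul_sum]
  refine Finset.sum_le_sum fun i _ => ?_
  rw [← hT, hb, real_inner_smul_left, real_inner_comm (b i) z]
  rcases lt_or_ge c (μ i) with h | h
  · simp [hz i h]
  · nlinarith [sq_nonneg ⟪b i, z⟫]

theorem OrthonormalBasis.inner_eq_zero_of_orthogonal_eigenvector (hT : T.IsSymmetric)
    (hb : ∀ i, T (b i) = μ i • b i) {i₀ : ι} (hsimple : ∀ i, μ i = μ i₀ → i = i₀) {u z : E}
    (hu : T u = μ i₀ • u) (hu0 : u ≠ 0) (hz : ⟪u, z⟫ = 0) : ⟪b i₀, z⟫ = 0 := by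
  have hcoord : ∀ i ≠ i₀, ⟪b i, u⟫ = 0 := by
    intro i hi
    have h : (μ i - μ i₀) * ⟪b i, u⟫ = 0 := by
      rw [sub_mul, ← real_inner_smul_left, ← hb, hT, hu, real_inner_smul_right, sub_self]
    exact (mul_eq_zero.mp h).resolve_left (sub_ne_zero.mpr fun h' => hi (hsimple i h'))
  have hu_eq : ⟪b i₀, u⟫ • b i₀ = u := by
    conv_rhs => rw [← b.sum_repr' u]
    rw [Finset.sum_eq_single i₀ (fun i _ hi => by rw [hcoord i hi, zero_smul]) (by simp)]
  have hd : ⟪b i₀, u⟫ ≠ 0 := fun h => hu0 (by rw [← hu_eq, h, zero_smul])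
  rw [← hu_eq, real_inner_smul_left] at hz
  exact (mul_eq_zero.mp hz).resolve_left hd

end Spectral

theorem Matrix.IsHermitian.inner_toEuclideanLin_le_of_sum_eq_zero {ι : Type*} [Fintype ι]
    [DecidableEq ι] {W : Matrix ι ι ℝ} (hW : W.IsHermitian) (hrow : ∀ i, ∑ j, W i j = 1)
    (hsimple : ∃! i, hW.eigenvalues i = 1) {c : ℝ}
    (hub : ∀ i, hW.eigenvalues i = 1 ∨ hW.eigenvalues i ≤ c) {z : EuclideanSpace ℝ ι}
    (hz : ∑ i, z i = 0) : ⟪z, toEuclideanLin W z⟫ ≤ c * ‖z‖ ^ 2 := by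
  obtain ⟨i₀, hi₀, huniq⟩ := hsimple
  have hT := isSymmetric_toEuclideanLin_iff.mpr hW
  have hb : ∀ i, toEuclideanLin W (hW.eigenvectorBasis i) =
      hW.eigenvalues i • hW.eigenvectorBasis i := fun i => by
    ext j
    simpa using congrFun (hW.mulVec_eigenvectorBasis i) j
  set ones : EuclideanSpace ℝ ι := WithLp.toLp 2 fun _ => 1
  have hones : toEuclideanLin W ones = hW.eigenvalues i₀ • ones := by
    ext i
    simp [ones, hi₀, mulVec, dotProduct, hrow]
  have hones0 : ones ≠ 0 := fun h => by simpa [ones] using congrArg (· i₀) h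
  have hz' : ⟪ones, z⟫ = 0 := by simpa [ones, PiLp.inner_apply] using hz
  refine hW.eigenvectorBasis.inner_map_self_le hT hb fun i hi => ?_
  obtain rfl : i = i₀ := huniq i ((hub i).resolve_right hi.not_ge)
  exact hW.eigenvectorBasis.inner_eq_zero_of_orthogonal_eigenvector hT hb
    (fun j hj => huniq j (hj.trans hi₀)) hones hones0 hz'

section Network

variable {m n : ℕ}

/-- The consensus vector `𝟙ₘ ⊗ u`. -/
def consensus (m : ℕ) {n : ℕ} (u : EuclideanSpace ℝ (Fin n)) : BigSpace m n :=
  WithLp.toLp 2 fun p => u p.2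

def blockAverage (x : BigSpace m n) : EuclideanSpace ℝ (Fin n) := (m : ℝ)⁻¹ • ∑ j, comp x j

theorem comp_consensus (u : EuclideanSpace ℝ (Fin n)) (i : Fin m) :
    comp (consensus m u) i = u :=
  rfl

theorem comp_add (x y : BigSpace m n) (i : Fin m) : comp (x + y) i = comp x i + comp y i := rfl

theorem comp_sub (x y : BigSpace m n) (i : Fin m) : comp (x - y) i = comp x i - comp y i := rfl

theorem comp_smul (c : ℝ) (x : BigSpace m n) (i : Fin m) : comp (c • x) i = c • comp x i := rfl

theorem contDiff_comp {k : WithTop ℕ∞} (i : Fin m) :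
    ContDiff ℝ k fun x : BigSpace m n => comp x i :=
  contDiff_piLp' 2 fun _ => contDiff_piLp_apply 2

theorem norm_comp_le (x : BigSpace m n) (i : Fin m) : ‖comp x i‖ ≤ ‖x‖ := by
  rw [EuclideanSpace.norm_eq, EuclideanSpace.norm_eq]
  refine Real.sqrt_le_sqrt ?_
  rw [Fintype.sum_prod_type]
  exact Finset.single_le_sum (f := fun k => ∑ j, ‖x (k, j)‖ ^ 2)
    (fun k _ => by positivity) (Finset.mem_univ i)

theorem norm_blockAverage_sub_comp_le (x : BigSpace m n) (i : Fin m) :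
    ‖blockAverage x - comp x i‖ ≤ ‖x - consensus m (blockAverage x)‖ := by
  rw [← norm_neg, neg_sub, ← comp_consensus (m := m) (blockAverage x) i, ← comp_sub]
  exact norm_comp_le _ i

theorem sum_sub_consensus_blockAverage (x : BigSpace m n) (j : Fin n) :
    ∑ i, (x - consensus m (blockAverage x)) (i, j) = 0 := by
  rcases eq_or_ne m 0 with rfl | hm
  · simp
  · simp [consensus, blockAverage, _root_.comp, Finset.sum_sub_distrib, WithLp.ofLp_sum, hm]

theorem differentiable_stackF {f : Fin m → EuclideanSpace ℝ (Fin n) → ℝ}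
    (hf : ∀ i, Differentiable ℝ (f i)) : Differentiable ℝ (stackF f) :=
  Differentiable.fun_sum fun i _ => (hf i).comp ((contDiff_comp i).differentiable one_ne_zero)

theorem Wact_eq_toEuclideanCLM (W : Matrix (Fin m) (Fin m) ℝ) (x : BigSpace m n) :
    Wact W x = toEuclideanCLM (𝕜 := ℝ) (W ⊗ₖ (1 : Matrix (Fin n) (Fin n) ℝ)) x := by
  ext p
  simp [Wact, mulVec, dotProduct, Fintype.sum_prod_type, one_apply]

theorem Wact_consensus {W : Matrix (Fin m) (Fin m) ℝ} (hrow : ∀ i, ∑ j, W i j = 1)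
    (u : EuclideanSpace ℝ (Fin n)) : Wact W (consensus m u) = consensus m u := by
  ext p
  simp [Wact, consensus, ← Finset.sum_mul, hrow]

theorem Wact_sub_consensus {W : Matrix (Fin m) (Fin m) ℝ} (hrow : ∀ i, ∑ j, W i j = 1)
    (x : BigSpace m n) (u : EuclideanSpace ℝ (Fin n)) :
    Wact W (x - consensus m u) = Wact W x - consensus m u := by
  rw [Wact_eq_toEuclideanCLM, map_sub, ← Wact_eq_toEuclideanCLM, ← Wact_eq_toEuclideanCLM,
    Wact_consensus hrow]

theorem sub_Wact_add_smul_consensus {W : Matrix (Fin m) (Fin m) ℝ}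
    (hrow : ∀ i, ∑ j, W i j = 1) (x : BigSpace m n) (t : ℝ) (u : EuclideanSpace ℝ (Fin n)) :
    x + t • consensus m u - Wact W (x + t • consensus m u) = x - Wact W x := by
  rw [Wact_eq_toEuclideanCLM, map_add, map_smul, ← Wact_eq_toEuclideanCLM,
    ← Wact_eq_toEuclideanCLM, Wact_consensus hrow]
  abel

theorem inner_Wact_le {W : Matrix (Fin m) (Fin m) ℝ} (hW : W.IsHermitian)
    (hrow : ∀ i, ∑ j, W i j = 1) (hsimple : ∃! i, hW.eigenvalues i = 1) {c : ℝ}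
    (hub : ∀ i, hW.eigenvalues i = 1 ∨ hW.eigenvalues i ≤ c) {y : BigSpace m n}
    (hy : ∀ j, ∑ i, y (i, j) = 0) : ⟪y, Wact W y⟫ ≤ c * ‖y‖ ^ 2 := by
  set col : Fin n → EuclideanSpace ℝ (Fin m) := fun j => WithLp.toLp 2 fun i => y (i, j)
  have hinner : ⟪y, Wact W y⟫ = ∑ j, ⟪col j, toEuclideanLin W (col j)⟫ := by
    simp only [PiLp.inner_apply, Wact, Fintype.sum_prod_type, col]
    rw [Finset.sum_comm]
    simp [mulVec, dotProduct]
  have hnorm : ‖y‖ ^ 2 = ∑ j, ‖col j‖ ^ 2 := by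
    simp only [EuclideanSpace.norm_sq_eq, Fintype.sum_prod_type, col]
    rw [Finset.sum_comm]
  rw [hinner, hnorm, Finset.mul_sum]
  exact Finset.sum_le_sum fun j _ =>
    hW.inner_toEuclideanLin_le_of_sum_eq_zero hrow hsimple hub (hy j)

theorem sub_Wact_eq_neg_smul_gradient {f : Fin m → EuclideanSpace ℝ (Fin n) → ℝ}
    (hf : ∀ i, Differentiable ℝ (f i)) {W : Matrix (Fin m) (Fin m) ℝ} (hW : W.IsHermitian)
    {α : ℝ} (hα : α ≠ 0) {x : BigSpace m n} (hmin : IsLocalMin (Qaux f W α) x) :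
    x - Wact W x = -α • gradient (stackF f) x := by
  set T := toEuclideanCLM (𝕜 := ℝ) (1 - W ⊗ₖ (1 : Matrix (Fin n) (Fin n) ℝ))
  have hT : ∀ y, y - Wact W y = T y := by simp [T, Wact_eq_toEuclideanCLM]
  have hTsymm : (T : BigSpace m n →ₗ[ℝ] BigSpace m n).IsSymmetric := by
    rw [coe_toEuclideanCLM_eq_toEuclideanLin, isSymmetric_toEuclideanLin_iff]
    refine isHermitian_one.sub ?_
    rw [IsHermitian, conjTranspose_kronecker, hW.eq, conjTranspose_one]
  have hQ : Qaux f W α = fun y => stackF f y + 1 / (2 * α) * T.reApplyInnerSelf y := by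
    funext y
    simp [Qaux, hT, T.reApplyInnerSelf_apply, real_inner_comm]
  have hgrad : HasGradientAt (Qaux f W α) (gradient (stackF f) x + α⁻¹ • T x) x := by
    rw [hasGradientAt_iff_hasFDerivAt, hQ]
    refine ((differentiable_stackF hf x).hasFDerivAt.fun_add
      ((hTsymm.hasStrictFDerivAt_reApplyInnerSelf x).hasFDerivAt.const_mul
        (1 / (2 * α)))).congr_fderiv ?_
    ext y
    simp only [one_div, _root_.mul_inv_rev, _root_.add_apply, _root_.smul_apply, coe_innerSL_apply,
      nsmul_eq_mul, Nat.cast_ofNat, smul_eq_mul, map_add, toDual_gradient, map_smul,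
      InnerProductSpace.toDual_apply_apply, add_right_inj]
    ring
  have h0 := hmin.hasGradientAt_eq_zero hgrad
  rw [hT, ← smul_inv_smul₀ hα (T x), eq_neg_of_add_eq_zero_right h0, smul_neg, neg_smul]

theorem norm_sub_consensus_blockAverage_le {W : Matrix (Fin m) (Fin m) ℝ} (hW : W.IsHermitian)
    (hrow : ∀ i, ∑ j, W i j = 1) (hsimple : ∃! i, hW.eigenvalues i = 1) {c : ℝ} (hc : c < 1)
    (hub : ∀ i, hW.eigenvalues i = 1 ∨ hW.eigenvalues i ≤ c) {α : ℝ} (hα : 0 ≤ α)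
    {x g : BigSpace m n} (hx : x - Wact W x = -α • g) :
    ‖x - consensus m (blockAverage x)‖ ≤ α * ‖g‖ / (1 - c) := by
  set y := x - consensus m (blockAverage x)
  have hy : y - Wact W y = -α • g := by
    rw [← hx, Wact_sub_consensus hrow]
    exact sub_sub_sub_cancel_right _ _ _
  have hspec := inner_Wact_le hW hrow hsimple hub (sum_sub_consensus_blockAverage x)
  have hcs : -α * ⟪y, g⟫ ≤ α * (‖y‖ * ‖g‖) := by
    nlinarith [neg_abs_le ⟪y, g⟫, abs_real_inner_le_norm y g]
  have hquad : (1 - c) * ‖y‖ * ‖y‖ ≤ α * ‖g‖ * ‖y‖ := by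
    calc (1 - c) * ‖y‖ * ‖y‖ ≤ ‖y‖ ^ 2 - ⟪y, Wact W y⟫ := by nlinarith
      _ = ⟪y, y - Wact W y⟫ := by rw [inner_sub_right, real_inner_self_eq_norm_sq]
      _ = -α * ⟪y, g⟫ := by rw [hy, real_inner_smul_right]
      _ ≤ α * ‖g‖ * ‖y‖ := by linarith
  rw [le_div_iff₀ (sub_pos.mpr hc)]
  rcases (norm_nonneg y).eq_or_lt with hy0 | hy0
  · rw [← hy0, zero_mul]
    positivity
  · nlinarith [le_of_mul_le_mul_right hquad hy0]

theorem sum_hessQF_nonneg_of_isLocalMin {f : Fin m → EuclideanSpace ℝ (Fin n) → ℝ}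
    (hf : ∀ i, ContDiff ℝ 2 (f i)) {W : Matrix (Fin m) (Fin m) ℝ} (hrow : ∀ i, ∑ j, W i j = 1)
    {α : ℝ} {x : BigSpace m n} (hmin : IsLocalMin (Qaux f W α) x)
    (v : EuclideanSpace ℝ (Fin n)) :
    0 ≤ ∑ i, hessQF (f i) (comp x i) v := by
  have hshift : ∀ i, ContDiff ℝ 2 fun u => f i (comp x i + u) := fun i =>
    (hf i).comp (contDiff_const.add contDiff_id)
  set ψ : EuclideanSpace ℝ (Fin n) → ℝ := fun u => ∑ i, f i (comp x i + u)
  set r := x - Wact W x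
  have hline : (fun t : ℝ => Qaux f W α (x + t • consensus m v)) =
      fun t => ψ (0 + t • v) + (1 / (2 * α) * ⟪x, r⟫ + 1 / (2 * α) * ⟪consensus m v, r⟫ * t) := by
    funext t
    rw [Qaux, sub_Wact_add_smul_consensus hrow, inner_add_left, real_inner_smul_left]
    simp only [stackF, ψ, comp_add, comp_smul, comp_consensus, zero_add]
    ring
  have hmin' : IsLocalMin (fun t : ℝ => Qaux f W α (x + t • consensus m v)) 0 := by
    have h0 : IsLocalMin (Qaux f W α) (x + (0 : ℝ) • consensus m v) := by simpa using hmin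
    exact h0.comp_continuous (g := fun t : ℝ => x + t • consensus m v) (by fun_prop)
  rw [hline] at hmin'
  have hsum : hessQF ψ 0 v = ∑ i, hessQF (f i) (comp x i) v := by
    rw [hessQF_sum (g := fun i u => f i (comp x i + u)) _ fun i _ => (hshift i).contDiffAt]
    simp only [hessQF_comp_add_left]
  exact hsum ▸ hessQF_nonneg_of_isLocalMin_comp_add_smul (ContDiff.sum fun i _ => hshift i) hmin'

end Network

theorem stmt9_general {m n : ℕ}
    (f : Fin m → EuclideanSpace ℝ (Fin n) → ℝ)
    (hf : ∀ i, ContDiff ℝ 2 (f i))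
    (H : Fin m → ℝ)
    (hHess : ∀ i x y, ‖iteratedFDeriv ℝ 2 (f i) x - iteratedFDeriv ℝ 2 (f i) y‖ ≤ H i * ‖x - y‖)
    (W : Matrix (Fin m) (Fin m) ℝ) (hW : W.IsHermitian)
    (hds : IsDoublyStochastic W)
    (hsimple : ∃! i, hW.eigenvalues i = 1)
    (lam2 : ℝ) (hlam2_lt : lam2 < 1)
    (hub : ∀ i, hW.eigenvalues i = 1 ∨ hW.eigenvalues i ≤ lam2)
    (α : ℝ) (hα : 0 < α)
    (xstar : BigSpace m n) (hmin : IsLocalMin (Qaux f W α) xstar) :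
    ∀ v : EuclideanSpace ℝ (Fin n),
      -(α * (⨆ i, H i) * (m : ℝ) ^ 2 * ‖gradient (stackF f) xstar‖ / (1 - lam2)) * ‖v‖ ^ 2 ≤
        hessQF (fun x => ∑ i, f i x) ((m : ℝ)⁻¹ • ∑ j, comp xstar j) v := by
  intro v
  rcases eq_or_ne v 0 with rfl | hv
  · simp [hessQF_zero_right]
  set L := ⨆ i, H i
  set B := α * ‖gradient (stackF f) xstar‖ / (1 - lam2) with hB
  have hH : ∀ i, 0 ≤ H i := fun i => nonneg_of_norm_sub_le_mul_norm_sub (hHess i) hv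
  have hstat := sub_Wact_eq_neg_smul_gradient (fun i => (hf i).differentiable two_ne_zero) hW
    hα.ne' hmin
  have hdist : ∀ i, ‖blockAverage xstar - comp xstar i‖ ≤ B := fun i =>
    (norm_blockAverage_sub_comp_le xstar i).trans <|
      norm_sub_consensus_blockAverage_le hW hds.2.1 hsimple hlam2_lt hub hα.le hstat
  have hcard : ∑ i, H i ≤ (m : ℝ) ^ 2 * L := by
    refine (Fintype.sum_le_card_mul_iSup H).trans ?_
    rw [Fintype.card_fin]
    gcongr
    · exact Real.iSup_nonneg hH
    · exact_mod_cast Nat.le_self_pow two_ne_zero m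
  have hB0 : 0 ≤ B := div_nonneg (by positivity) (sub_pos.mpr hlam2_lt).le
  calc -(α * L * (m : ℝ) ^ 2 * ‖gradient (stackF f) xstar‖ / (1 - lam2)) * ‖v‖ ^ 2
      = -((m : ℝ) ^ 2 * L * (B * ‖v‖ ^ 2)) := by rw [hB]; ring
    _ ≤ ∑ i, hessQF (f i) (comp xstar i) v - ∑ i, H i * B * ‖v‖ ^ 2 := by
        have := mul_le_mul_of_nonneg_right hcard (by positivity : 0 ≤ B * ‖v‖ ^ 2)
        simp only [Finset.sum_mul, mul_assoc] at this ⊢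
        linarith [sum_hessQF_nonneg_of_isLocalMin hf hds.2.1 hmin v]
    _ ≤ ∑ i, hessQF (f i) (blockAverage xstar) v := by
        rw [← Finset.sum_sub_distrib]
        exact Finset.sum_le_sum fun i _ => hessQF_sub_le_of_lipschitz (hHess i) (hH i) (hdist i) v
    _ = hessQF (fun x => ∑ i, f i x) (blockAverage xstar) v :=
        (hessQF_sum _ (fun i _ => (hf i).contDiffAt) v).symm

/-- Lemma 3: under the hypotheses on `W` as before, with each `fᵢ` twice
continuously differentiable with `Hᵢ`-Lipschitz Hessian and `L_F^H = maxᵢ Hᵢ`, if `x̂*`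
is a local minimizer of `Q_α` and `x̄* = (1/m) Σⱼ x̂*ⱼ`, then
`λ_min(∇²f(x̄*)) ≥ −α L_F^H m² ‖∇F(x̂*)‖ / (1 − λ₂)` (stated via the Hessian
quadratic form: `vᵀ ∇²f(x̄*) v ≥ −c ‖v‖²` for all `v`). -/
theorem stmt9 {m n : ℕ} (hm : 0 < m)
    (f : Fin m → EuclideanSpace ℝ (Fin n) → ℝ)
    (hf : ∀ i, ContDiff ℝ 2 (f i))
    (H : Fin m → ℝ)
    (hHess : ∀ i x y, ‖iteratedFDeriv ℝ 2 (f i) x - iteratedFDeriv ℝ 2 (f i) y‖ ≤ H i * ‖x - y‖)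
    (W : Matrix (Fin m) (Fin m) ℝ) (hW : W.IsHermitian)
    (hds : IsDoublyStochastic W) (hpd : W.PosDef)
    (hsimple : ∃! i, hW.eigenvalues i = 1)
    (lam2 : ℝ) (hlam2_pos : 0 < lam2) (hlam2_lt : lam2 < 1)
    (hub : ∀ i, hW.eigenvalues i = 1 ∨ hW.eigenvalues i ≤ lam2)
    (hmem : ∃ i, hW.eigenvalues i ≠ 1 ∧ hW.eigenvalues i = lam2)
    (α : ℝ) (hα : 0 < α)
    (xstar : BigSpace m n) (hmin : IsLocalMin (Qaux f W α) xstar) :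
    ∀ v : EuclideanSpace ℝ (Fin n),
      -(α * (⨆ i, H i) * (m : ℝ) ^ 2 * ‖gradient (stackF f) xstar‖ / (1 - lam2)) * ‖v‖ ^ 2 ≤
        hessQF (fun x => ∑ i, f i x) ((m : ℝ)⁻¹ • ∑ j, comp xstar j) v :=
  stmt9_general f hf H hHess W hW hds hsimple lam2 hlam2_lt hub α hα xstar hmin
end
end

section
/- (Lemma 4) Let f : ℝⁿ → ℝ be twice continuously differentiable and satisfy the strict-saddle property: at every point x with ∇f(x) = 0, either λ_min(∇²f(x)) > 0 or λ_min(∇²f(x)) < 0. Let X_f* = {x : ∇f(x) = 0 and ∇²f(x) is positive definite}. Fix constants c₁, c₂ > 0 and for α > 0 let X_f^α = {x : ‖∇f(x)‖ ≤ α c₁ and λ_min(∇²f(x)) ≥ −α c₂}. Then for every compact set X ⊂ ℝⁿ and every d > 0, there exists ᾱ > 0 such that for all α ∈ (0, ᾱ] and all x ∈ X_f^α ∩ X, dist(x, X_f*) ≤ d. -/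
open scoped BigOperators RealInnerProductSpace
open Matrix MeasureTheory

noncomputable section

/-!
The sets `X_f^α` are closed and shrink as `α ↓ 0`; a point lying in all of them has zero
gradient and positive semidefinite Hessian, so by the strict-saddle property its Hessian is
positive definite, i.e. it lies in `X_f*`. Hence the intersection over `α > 0` lies in the open
`d`-neighbourhood of `X_f*`, and compactness of `X` (finite intersection property) gives a
single `ᾱ` that already works.
-/

theorem le_zero_of_forall_pos_le_mul {a c : ℝ} (h : ∀ α > 0, a ≤ α * c) : a ≤ 0 := by
  have hlim : Filter.Tendsto (fun α : ℝ => α * c) (nhdsWithin 0 (Set.Ioi 0)) (nhds 0) :=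
    ((continuous_mul_const c).tendsto' 0 0 (zero_mul c)).mono_left nhdsWithin_le_nhds
  exact ge_of_tendsto hlim (eventually_nhdsWithin_of_forall h)

theorem IsCompact.exists_pos_forall_inter_subset {E : Type*} [TopologicalSpace E]
    {K U : Set E} (hK : IsCompact K) (hU : IsOpen U) {P : ℝ → Set E}
    (hP : ∀ α > 0, IsClosed (P α)) (hmono : ∀ α β, 0 < α → α ≤ β → P α ⊆ P β)
    (hlim : ∀ x ∈ K, (∀ α > 0, x ∈ P α) → x ∈ U) :
    ∃ αbar > 0, ∀ α, 0 < α → α ≤ αbar → K ∩ P α ⊆ U := by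
  let t : Set.Ioi (0 : ℝ) → Set E := fun α => P α
  have hdir : Directed (· ⊇ ·) t := fun α β =>
    have hmin : (0 : ℝ) < min α β := lt_min α.2 β.2
    ⟨⟨min α β, hmin⟩, hmono _ _ hmin (min_le_left _ _), hmono _ _ hmin (min_le_right _ _)⟩
  have hempty : (K \ U) ∩ ⋂ α, t α = ∅ := by
    refine Set.eq_empty_of_forall_notMem fun x ⟨⟨hxK, hxU⟩, hx⟩ => hxU (hlim x hxK ?_)
    exact fun α hα => Set.mem_iInter.1 hx ⟨α, hα⟩
  have : Nonempty (Set.Ioi (0 : ℝ)) := Set.nonempty_Ioi.to_subtype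
  obtain ⟨⟨αbar, hαbar⟩, hαbar_empty⟩ :=
    (hK.diff hU).elim_directed_family_closed t (fun α => hP α α.2) hempty hdir
  refine ⟨αbar, hαbar, fun α hα hle x ⟨hxK, hxP⟩ => ?_⟩
  by_contra hxU
  exact Set.eq_empty_iff_forall_notMem.1 hαbar_empty x
    ⟨⟨hxK, hxU⟩, hmono α αbar hα hle hxP⟩

theorem ContDiff.continuous_gradient {F : Type*} [NormedAddCommGroup F] [InnerProductSpace ℝ F]
    [CompleteSpace F] {f : F → ℝ} {k : WithTop ℕ∞} (hf : ContDiff ℝ k f) (hk : k ≠ 0) :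
    Continuous (gradient f) :=
  (InnerProductSpace.toDual ℝ F).symm.continuous.comp (hf.continuous_fderiv hk)

theorem ContDiff.continuous_hessQF {E : Type*} [NormedAddCommGroup E] [NormedSpace ℝ E]
    {g : E → ℝ} (hg : ContDiff ℝ 2 g) (v : E) : Continuous fun x => hessQF g x v :=
  (continuous_eval_const ![v, v]).comp (hg.continuous_iteratedFDeriv le_rfl)

section ApproxSecondOrder

variable {E : Type*} [NormedAddCommGroup E] [InnerProductSpace ℝ E] [CompleteSpace E]
  {f : E → ℝ} {c₁ c₂ : ℝ}

/-- The set `X_f^α` of approximate second-order stationary points. -/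
def approxSecondOrderSet (f : E → ℝ) (c₁ c₂ α : ℝ) : Set E :=
  {x | ‖gradient f x‖ ≤ α * c₁ ∧ ∀ v, -(α * c₂) * ‖v‖ ^ 2 ≤ hessQF f x v}

theorem isClosed_approxSecondOrderSet (hf : ContDiff ℝ 2 f) (α : ℝ) :
    IsClosed (approxSecondOrderSet f c₁ c₂ α) := by
  rw [approxSecondOrderSet, Set.ofPred_and, Set.ofPred_forall]
  refine (isClosed_le (hf.continuous_gradient two_ne_zero).norm continuous_const).inter ?_
  exact isClosed_iInter fun v => isClosed_le continuous_const (hf.continuous_hessQF v)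

theorem approxSecondOrderSet_mono (hc₁ : 0 ≤ c₁) (hc₂ : 0 ≤ c₂) {α β : ℝ}
    (hle : α ≤ β) :
    approxSecondOrderSet f c₁ c₂ α ⊆ approxSecondOrderSet f c₁ c₂ β :=
  fun _ ⟨hgrad, hhess⟩ =>
    ⟨hgrad.trans (mul_le_mul_of_nonneg_right hle hc₁), fun v =>
      (mul_le_mul_of_nonneg_right (neg_le_neg (mul_le_mul_of_nonneg_right hle hc₂))
        (sq_nonneg _)).trans (hhess v)⟩

theorem gradient_eq_zero_and_hessQF_nonneg {x : E}
    (hx : ∀ α > 0, x ∈ approxSecondOrderSet f c₁ c₂ α) :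
    gradient f x = 0 ∧ ∀ v, 0 ≤ hessQF f x v :=
  ⟨norm_le_zero_iff.1 (le_zero_of_forall_pos_le_mul fun α hα => (hx α hα).1), fun v =>
    neg_nonpos.1 (le_zero_of_forall_pos_le_mul (c := c₂ * ‖v‖ ^ 2) fun α hα => by
      linarith [(hx α hα).2 v])⟩

end ApproxSecondOrder

/-- Lemma 4: let `f` be `C²` with the strict-saddle property (at every
critical point, `λ_min(∇²f) > 0` or `λ_min(∇²f) < 0`, stated via the Hessian quadratic
form). Let `X_f* = {x : ∇f(x) = 0, ∇²f(x) ≻ 0}` and, for fixed `c₁, c₂ > 0`,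
`X_f^α = {x : ‖∇f(x)‖ ≤ α c₁, λ_min(∇²f(x)) ≥ −α c₂}`. Then for every compact `X` and
every `d > 0` there is `ᾱ > 0` with: for all `α ∈ (0, ᾱ]` and all `x ∈ X_f^α ∩ X`,
`dist(x, X_f*) ≤ d`. -/
theorem stmt10 {n : ℕ}
    (f : EuclideanSpace ℝ (Fin n) → ℝ) (hf : ContDiff ℝ 2 f)
    (hsaddle : ∀ x, gradient f x = 0 →
      (∀ v ≠ 0, 0 < hessQF f x v) ∨ (∃ v, hessQF f x v < 0))
    (c₁ c₂ : ℝ) (hc₁ : 0 < c₁) (hc₂ : 0 < c₂)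
    (X : Set (EuclideanSpace ℝ (Fin n))) (hX : IsCompact X)
    (d : ℝ) (hd : 0 < d) :
    ∃ αbar > 0, ∀ α, 0 < α → α ≤ αbar → ∀ x ∈ X,
      ‖gradient f x‖ ≤ α * c₁ →
      (∀ v, -(α * c₂) * ‖v‖ ^ 2 ≤ hessQF f x v) →
      Metric.infDist x {y | gradient f y = 0 ∧ ∀ v ≠ 0, 0 < hessQF f y v} ≤ d := by
  set S := {y | gradient f y = 0 ∧ ∀ v ≠ 0, 0 < hessQF f y v}
  have hlim : ∀ x ∈ X, (∀ α > 0, x ∈ approxSecondOrderSet f c₁ c₂ α) →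
      x ∈ {x | Metric.infDist x S < d} := by
    intro x _ hx
    obtain ⟨hgrad, hhess⟩ := gradient_eq_zero_and_hessQF_nonneg hx
    rcases hsaddle x hgrad with hpos | ⟨v, hv⟩
    · have hxS : x ∈ S := ⟨hgrad, hpos⟩
      simpa only [Set.mem_ofPred_eq, Metric.infDist_zero_of_mem hxS] using hd
    · exact absurd (hhess v) hv.not_ge
  obtain ⟨αbar, hαbar, hsub⟩ := hX.exists_pos_forall_inter_subset
    (isOpen_lt (Metric.continuous_infDist_pt S) continuous_const)
    (fun α _ => isClosed_approxSecondOrderSet hf α)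
    (fun _ _ _ => approxSecondOrderSet_mono hc₁.le hc₂.le) hlim
  exact ⟨αbar, hαbar, fun α hα hle x hxX hgrad hhess =>
    (hsub α hα hle ⟨hxX, hgrad, hhess⟩).le⟩
end
end
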